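/- With Λ(0) = (1/t_f)(−I + Σ₀^{-1/2}(Σ₀^{1/2}Σ_fΣ₀^{1/2})^{1/2}Σ₀^{-1/2}) invertible and M = Λ(0)^{-1}Σ₀^{-1}Λ(0)^{-1}, one has t_f·trace(M^{-1}) = t_f·trace(Λ(0)Σ₀Λ(0)) = (1/t_f)·trace(Σ₀ + Σ_f − 2(Σ₀^{1/2}Σ_fΣ₀^{1/2})^{1/2}). -/

import Mathlib

/-!
Up to the factor `1 / t_f`, `Λ(0)` is `T - 1` with
`T = Σ₀^{-1/2} (Σ₀^{1/2} Σf Σ₀^{1/2})^{1/2} Σ₀^{-1/2}`, the optimal transport map between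
the two Gaussians. It satisfies `T Σ₀ T = Σf` and, by cyclicity of the trace,
`tr (T Σ₀) = tr (Σ₀^{1/2} Σf Σ₀^{1/2})^{1/2}`; expanding `(T - 1) Σ₀ (T - 1)` gives the
trace formula. The first equality just inverts the product `Λ(0)⁻¹ Σ₀⁻¹ Λ(0)⁻¹`.
-/

set_option autoImplicit false
open Matrix
noncomputable section

open scoped ComplexOrder in
/-- The square root of a positive semidefinite matrix, as `Matrix.PosSemidef.sqrt` was defined
in Mathlib (December 2024); Mathlib has since removed it in favour of `CFC.sqrt`. -/
noncomputable def Matrix.PosSemidef.sqrt {m 𝕜 : Type*} [Fintype m] [DecidableEq m] [RCLike 𝕜]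
    {A : Matrix m m 𝕜} (hA : A.PosSemidef) : Matrix m m 𝕜 :=
  hA.1.eigenvectorUnitary.1 * diagonal ((↑) ∘ (√·) ∘ hA.1.eigenvalues) *
    (star hA.1.eigenvectorUnitary : Matrix m m 𝕜)

open scoped ComplexOrder in
theorem Matrix.PosSemidef.posSemidef_sqrt {m 𝕜 : Type*} [Fintype m] [DecidableEq m] [RCLike 𝕜]
    {A : Matrix m m 𝕜} (hA : A.PosSemidef) : hA.sqrt.PosSemidef := by
  unfold Matrix.PosSemidef.sqrt
  have hd : (diagonal ((↑) ∘ (√·) ∘ hA.1.eigenvalues) : Matrix m m 𝕜).PosSemidef := by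
    rw [posSemidef_diagonal_iff]
    intro i
    simp only [Function.comp_apply, RCLike.ofReal_nonneg]
    exact Real.sqrt_nonneg _
  have h := hd.mul_mul_conjTranspose_same (hA.1.eigenvectorUnitary.1)
  simpa [Matrix.star_eq_conjTranspose] using h

/-- The middle matrix `Σ₀^{1/2} Σf Σ₀^{1/2}` is positive semidefinite. -/
theorem midPosSemidef {n : ℕ} {S0 Sf : Matrix (Fin n) (Fin n) ℝ}
    (h0 : S0.PosDef) (hf : Sf.PosDef) :
    (h0.posSemidef.sqrt * Sf * h0.posSemidef.sqrt).PosSemidef := by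
  have h := hf.posSemidef.mul_mul_conjTranspose_same h0.posSemidef.sqrt
  rwa [h0.posSemidef.posSemidef_sqrt.isHermitian] at h

/-- `Λ(0) = (1/t_f)(−I + Σ₀^{-1/2}(Σ₀^{1/2}ΣfΣ₀^{1/2})^{1/2}Σ₀^{-1/2})`. -/
noncomputable def lam0 {n : ℕ} {S0 Sf : Matrix (Fin n) (Fin n) ℝ}
    (h0 : S0.PosDef) (hf : Sf.PosDef) (tf : ℝ) : Matrix (Fin n) (Fin n) ℝ :=
  (1 / tf) • (-1 + (h0.posSemidef.sqrt)⁻¹ * (midPosSemidef h0 hf).sqrt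
    * (h0.posSemidef.sqrt)⁻¹)

/-- `M = Λ(0)^{-1} Σ₀^{-1} Λ(0)^{-1}`. -/
noncomputable def Mmat {n : ℕ} {S0 Sf : Matrix (Fin n) (Fin n) ℝ}
    (h0 : S0.PosDef) (hf : Sf.PosDef) (tf : ℝ) : Matrix (Fin n) (Fin n) ℝ :=
  (lam0 h0 hf tf)⁻¹ * S0⁻¹ * (lam0 h0 hf tf)⁻¹

section
open scoped ComplexOrder
variable {m 𝕜 : Type*} [Fintype m] [DecidableEq m] [RCLike 𝕜]

theorem Matrix.PosSemidef.sqrt_mul_self {A : Matrix m m 𝕜} (hA : A.PosSemidef) :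
    hA.sqrt * hA.sqrt = A := by
  have hsqrt : hA.sqrt = Unitary.conjStarAlgAut 𝕜 _ hA.1.eigenvectorUnitary
      (diagonal ((↑) ∘ (√·) ∘ hA.1.eigenvalues)) := by
    rw [Unitary.conjStarAlgAut_apply]; rfl
  conv_rhs => rw [hA.1.spectral_theorem]
  rw [hsqrt, ← map_mul, diagonal_mul_diagonal]
  congr 2
  funext i
  simp only [Function.comp_apply, ← RCLike.ofReal_mul,
    Real.mul_self_sqrt (hA.eigenvalues_nonneg i)]

theorem Matrix.PosDef.isUnit_sqrt {A : Matrix m m 𝕜} (hA : A.PosDef) :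
    IsUnit hA.posSemidef.sqrt :=
  isUnit_of_mul_isUnit_left (hA.posSemidef.sqrt_mul_self ▸ hA.isUnit)

end

namespace Matrix

variable {m α : Type*} [Fintype m] [DecidableEq m] [CommRing α]

theorem inv_mul_inv_mul_inv_inv {L S : Matrix m m α} (hL : IsUnit L) (hS : IsUnit S) :
    (L⁻¹ * S⁻¹ * L⁻¹)⁻¹ = L * S * L := by
  rw [mul_inv_rev, mul_inv_rev, nonsing_inv_nonsing_inv _ ((isUnit_iff_isUnit_det L).1 hL),
    nonsing_inv_nonsing_inv _ ((isUnit_iff_isUnit_det S).1 hS), Matrix.mul_assoc]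

theorem trace_neg_one_add_mul_mul_neg_one_add (T S : Matrix m m α) :
    ((-1 + T) * S * (-1 + T)).trace = (S + T * S * T).trace - 2 * (T * S).trace := by
  have hST : (S * T).trace = (T * S).trace := trace_mul_comm S T
  have hexpand : (-1 + T) * S * (-1 + T) = S + T * S * T - T * S - S * T := by noncomm_ring
  rw [hexpand, trace_sub, trace_sub, hST]
  ring

theorem inv_mul_mul_inv_mul_mul_self {A : Matrix m m α} (hA : IsUnit A) (B : Matrix m m α) :
    A⁻¹ * B * A⁻¹ * (A * A) * (A⁻¹ * B * A⁻¹) = A⁻¹ * (B * B) * A⁻¹ := by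
  have hdet := (isUnit_iff_isUnit_det A).1 hA
  have hcancel : A⁻¹ * (A * A) * A⁻¹ = 1 := by
    rw [← Matrix.mul_assoc, nonsing_inv_mul _ hdet, Matrix.one_mul, mul_nonsing_inv _ hdet]
  calc A⁻¹ * B * A⁻¹ * (A * A) * (A⁻¹ * B * A⁻¹)
      = A⁻¹ * B * (A⁻¹ * (A * A) * A⁻¹) * B * A⁻¹ := by simp only [Matrix.mul_assoc]
    _ = A⁻¹ * (B * B) * A⁻¹ := by rw [hcancel, Matrix.mul_one, Matrix.mul_assoc A⁻¹ B B]

theorem trace_inv_mul_mul_inv_mul_mul_self {A : Matrix m m α} (hA : IsUnit A) (B : Matrix m m α) :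
    (A⁻¹ * B * A⁻¹ * (A * A)).trace = B.trace := by
  have hdet := (isUnit_iff_isUnit_det A).1 hA
  have hcancel : A⁻¹ * B * A⁻¹ * (A * A) = A⁻¹ * B * A := by
    rw [← Matrix.mul_assoc, nonsing_inv_mul_cancel_right _ _ hdet]
  rw [hcancel, trace_mul_cycle, mul_nonsing_inv _ hdet, Matrix.one_mul]

end Matrix

theorem stmt9_general {n : ℕ} (S0 Sf : Matrix (Fin n) (Fin n) ℝ)
    (h0 : S0.PosDef) (hf : Sf.PosDef) (tf : ℝ)
    (hinv : IsUnit (lam0 h0 hf tf)) :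
    tf * ((Mmat h0 hf tf)⁻¹).trace
        = tf * ((lam0 h0 hf tf) * S0 * (lam0 h0 hf tf)).trace ∧
    tf * ((lam0 h0 hf tf) * S0 * (lam0 h0 hf tf)).trace
        = (1 / tf) * (S0 + Sf - 2 • (midPosSemidef h0 hf).sqrt).trace := by
  refine ⟨by rw [Mmat, inv_mul_inv_mul_inv_inv hinv h0.isUnit], ?_⟩
  set A := h0.posSemidef.sqrt
  set B := (midPosSemidef h0 hf).sqrt
  have hA : IsUnit A := h0.isUnit_sqrt
  have hAA : A * A = S0 := h0.posSemidef.sqrt_mul_self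
  have hBB : B * B = A * Sf * A := (midPosSemidef h0 hf).sqrt_mul_self
  have hTST : A⁻¹ * B * A⁻¹ * S0 * (A⁻¹ * B * A⁻¹) = Sf := by
    have hdet := (isUnit_iff_isUnit_det A).1 hA
    rw [← hAA, inv_mul_mul_inv_mul_mul_self hA, hBB, Matrix.mul_assoc A,
      nonsing_inv_mul_cancel_left _ _ hdet, mul_nonsing_inv_cancel_right _ _ hdet]
  have hTS : (A⁻¹ * B * A⁻¹ * S0).trace = B.trace :=
    hAA ▸ trace_inv_mul_mul_inv_mul_mul_self hA B
  have hlam : lam0 h0 hf tf * S0 * lam0 h0 hf tf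
      = (tf⁻¹ * tf⁻¹) • ((-1 + A⁻¹ * B * A⁻¹) * S0 * (-1 + A⁻¹ * B * A⁻¹)) := by
    rw [lam0, one_div, Matrix.smul_mul, Matrix.smul_mul, Matrix.mul_smul, smul_smul]
  rw [hlam, trace_smul, trace_neg_one_add_mul_mul_neg_one_add, hTST, hTS, trace_sub, trace_smul,
    smul_eq_mul, nsmul_eq_mul, Nat.cast_ofNat, ← mul_assoc, ← mul_assoc, one_div]
  congr 1
  simpa using inv_mul_mul_self tf⁻¹

/-- `t_f·trace(M^{-1}) = t_f·trace(Λ(0)Σ₀Λ(0))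
= (1/t_f)·trace(Σ₀ + Σf − 2(Σ₀^{1/2}ΣfΣ₀^{1/2})^{1/2})`. -/
theorem stmt9 {n : ℕ} (S0 Sf : Matrix (Fin n) (Fin n) ℝ)
    (h0 : S0.PosDef) (hf : Sf.PosDef) (tf : ℝ) (htf : 0 < tf)
    (hinv : IsUnit (lam0 h0 hf tf)) :
    tf * ((Mmat h0 hf tf)⁻¹).trace
        = tf * ((lam0 h0 hf tf) * S0 * (lam0 h0 hf tf)).trace ∧
    tf * ((lam0 h0 hf tf) * S0 * (lam0 h0 hf tf)).trace
        = (1 / tf) * (S0 + Sf - 2 • (midPosSemidef h0 hf).sqrt).trace :=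
  stmt9_general S0 Sf h0 hf tf hinv
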